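/- arXiv:2310.04085 — 3 statements merged into one kernel-verified Lean document; each statement's English description precedes it below -/
import Mathlib

section
/- Let W = diag(V/2, Id/2) be a block-diagonal symmetric 2d×2d matrix where V is an invertible symmetric d×d matrix with exactly one negative eigenvalue, and let L = (L_x,L_v) ∈ ℝ^{2d}. Then W + L Lᵗ is positive definite if and only if -V⁻¹L_x·L_x - |L_v|² > 1/2. -/
/-! Put `u := W⁻¹ L` and `s := L ⬝ᵥ u`. When `s ≠ 0`, every `x` splits as `x = α u + w` with
`L ⬝ᵥ w = 0`, and then `xᵀ (W + L Lᵀ) x = α² s (1 + s) + wᵀ W w`. The form of `W` has a negative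
direction and is positive definite on a hyperplane. If `s > 0`, the `L`-orthogonal part of a
negative vector is still negative, so `W + L Lᵀ` is not positive definite; if `s < 0`, a
nonpositive `w ⊥ L` would span with `u` a nonpositive plane, which must meet that hyperplane, so
`W` is positive definite on `L⊥`. Hence `W + L Lᵀ` is positive definite iff `s < -1`, and for
`W = diag(V/2, I/2)` one has `u = (2 V⁻¹ Lx, 2 Lv)`. -/

namespace Matrix

variable {n : Type*} [Fintype n]

theorem IsHermitian.dotProduct_mulVec_comm {A : Matrix n n ℝ} (hA : A.IsHermitian) (x y : n → ℝ) :
    x ⬝ᵥ A *ᵥ y = y ⬝ᵥ A *ᵥ x := by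
  rw [dotProduct_mulVec, ← mulVec_transpose, ← conjTranspose_eq_transpose_of_trivial, hA.eq,
    dotProduct_comm]

theorem dotProduct_add_vecMulVec_mulVec_self (A : Matrix n n ℝ) (ℓ x : n → ℝ) :
    x ⬝ᵥ (A + vecMulVec ℓ ℓ) *ᵥ x = x ⬝ᵥ A *ᵥ x + (ℓ ⬝ᵥ x) ^ 2 := by
  rw [add_mulVec, dotProduct_add, vecMulVec_mulVec]
  simp [dotProduct_comm x ℓ, sq]

theorem IsHermitian.posDef_add_vecMulVec_iff {A : Matrix n n ℝ} (hA : A.IsHermitian)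
    (ℓ : n → ℝ) :
    (A + vecMulVec ℓ ℓ).PosDef ↔ ∀ x ≠ 0, 0 < x ⬝ᵥ A *ᵥ x + (ℓ ⬝ᵥ x) ^ 2 := by
  have hℓ : (vecMulVec ℓ ℓ).IsHermitian := by
    simpa using (posSemidef_vecMulVec_self_star ℓ).isHermitian
  simp only [posDef_iff_dotProduct_mulVec, star_trivial, dotProduct_add_vecMulVec_mulVec_self,
    and_iff_right (hA.add hℓ)]

theorem IsHermitian.dotProduct_mulVec_smul_add {A : Matrix n n ℝ} (hA : A.IsHermitian)
    {ℓ u w : n → ℝ} (hu : A *ᵥ u = ℓ) (hw : ℓ ⬝ᵥ w = 0) (a : ℝ) :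
    (a • u + w) ⬝ᵥ A *ᵥ (a • u + w) = a ^ 2 * (ℓ ⬝ᵥ u) + w ⬝ᵥ A *ᵥ w := by
  have huw : u ⬝ᵥ A *ᵥ w = 0 := by rw [hA.dotProduct_mulVec_comm, hu, dotProduct_comm, hw]
  simp only [mulVec_add, mulVec_smul, dotProduct_add, add_dotProduct, dotProduct_smul,
    smul_dotProduct, huw, hu, smul_eq_mul, dotProduct_comm u ℓ, dotProduct_comm w ℓ, hw]
  ring

theorem dotProduct_sub_div_smul_eq_zero {ℓ u : n → ℝ} (hs : ℓ ⬝ᵥ u ≠ 0) (x : n → ℝ) :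
    ℓ ⬝ᵥ (x - (ℓ ⬝ᵥ x / ℓ ⬝ᵥ u) • u) = 0 := by
  rw [dotProduct_sub, dotProduct_smul, smul_eq_mul, div_mul_cancel₀ _ hs, sub_self]

/-- Nondegenerate of signature `(n - 1, 1)`. -/
structure IsLorentzian (A : Matrix n n ℝ) : Prop where
  isHermitian : A.IsHermitian
  exists_neg : ∃ e, e ⬝ᵥ A *ᵥ e < 0
  exists_pos_on_hyperplane : ∃ f, ∀ x ≠ 0, f ⬝ᵥ x = 0 → 0 < x ⬝ᵥ A *ᵥ x

namespace IsLorentzian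

variable {A : Matrix n n ℝ} {ℓ u : n → ℝ}

theorem pos_on_orthogonal_of_dotProduct_neg (hA : A.IsLorentzian) (hu : A *ᵥ u = ℓ)
    (hs : ℓ ⬝ᵥ u < 0) {w : n → ℝ} (hw0 : w ≠ 0) (hw : ℓ ⬝ᵥ w = 0) : 0 < w ⬝ᵥ A *ᵥ w := by
  obtain ⟨f, hf⟩ := hA.exists_pos_on_hyperplane
  by_contra! hqw
  by_cases hfw : f ⬝ᵥ w = 0
  · exact hqw.not_gt (hf w hw0 hfw)
  -- the plane spanned by `u` and `w` is negative semidefinite, so it cannot meet `f⊥` trivially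
  set y := (f ⬝ᵥ w) • u + (-(f ⬝ᵥ u)) • w
  have hqy : y ⬝ᵥ A *ᵥ y < 0 := by
    rw [hA.isHermitian.dotProduct_mulVec_smul_add hu (by rw [dotProduct_smul, hw, smul_zero]),
      mulVec_smul, dotProduct_smul, smul_dotProduct]
    simp only [smul_eq_mul]
    nlinarith [sq_pos_of_ne_zero hfw, mul_self_nonneg (f ⬝ᵥ u)]
  have hy0 : y ≠ 0 := by
    rintro hy; simp [hy] at hqy
  have hfy : f ⬝ᵥ y = 0 := by
    simp only [y, dotProduct_add, dotProduct_smul, smul_eq_mul]; ring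
  exact hqy.not_gt (hf y hy0 hfy)

theorem dotProduct_lt_neg_one_of_posDef (hA : A.IsLorentzian) (hu : A *ᵥ u = ℓ)
    (hpd : (A + vecMulVec ℓ ℓ).PosDef) : ℓ ⬝ᵥ u < -1 := by
  rw [hA.isHermitian.posDef_add_vecMulVec_iff] at hpd
  set s := ℓ ⬝ᵥ u with hs_def
  obtain ⟨e, he⟩ := hA.exists_neg
  have he0 : e ≠ 0 := by rintro rfl; simp at he
  have hu0 : u ≠ 0 := by
    rintro rfl
    rw [mulVec_zero] at hu
    have hQe := hpd e he0
    rw [← hu, zero_dotProduct] at hQe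
    linarith [zero_pow two_ne_zero (M₀ := ℝ)]
  have hQu := hpd u hu0
  rw [hu, dotProduct_comm] at hQu
  by_contra! hs
  have hs0 : 0 < s := by nlinarith
  -- the component of `e` in `ℓ⊥` is still negative, but `A + ℓℓᵀ` agrees with `A` there
  set w := e - (ℓ ⬝ᵥ e / s) • u
  have hw : ℓ ⬝ᵥ w = 0 := dotProduct_sub_div_smul_eq_zero hs0.ne' e
  have hqe := hA.isHermitian.dotProduct_mulVec_smul_add hu hw (ℓ ⬝ᵥ e / s)
  rw [add_sub_cancel, ← hs_def] at hqe
  have hqw : w ⬝ᵥ A *ᵥ w < 0 := by nlinarith [sq_nonneg (ℓ ⬝ᵥ e / s)]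
  have hw0 : w ≠ 0 := by rintro hw0; simp [hw0] at hqw
  have hQw := hpd w hw0
  rw [hw] at hQw
  linarith

theorem posDef_add_vecMulVec_of_lt_neg_one (hA : A.IsLorentzian) (hu : A *ᵥ u = ℓ)
    (hs : ℓ ⬝ᵥ u < -1) : (A + vecMulVec ℓ ℓ).PosDef := by
  rw [hA.isHermitian.posDef_add_vecMulVec_iff]
  intro x hx0
  set s := ℓ ⬝ᵥ u with hs_def
  set α := ℓ ⬝ᵥ x / s
  set w := x - α • u
  have hw : ℓ ⬝ᵥ w = 0 := dotProduct_sub_div_smul_eq_zero (by linarith) x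
  have hℓx : ℓ ⬝ᵥ x = α * s := (div_mul_cancel₀ _ (by linarith)).symm
  have hqx := hA.isHermitian.dotProduct_mulVec_smul_add hu hw α
  rw [add_sub_cancel, ← hs_def] at hqx
  rw [hqx, hℓx]
  have hs1 : 0 < s * (1 + s) := mul_pos_of_neg_of_neg (by linarith) (by linarith)
  by_cases hw0 : w = 0
  · have hα : α ≠ 0 := fun hα => hx0 (by simpa [w, hα] using hw0)
    rw [hw0]
    simp only [mulVec_zero, dotProduct_zero, add_zero]
    nlinarith [mul_pos (sq_pos_of_ne_zero hα) hs1]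
  · nlinarith [hA.pos_on_orthogonal_of_dotProduct_neg hu (by linarith) hw0 hw,
      mul_nonneg (sq_nonneg α) hs1.le]

theorem posDef_add_vecMulVec_iff (hA : A.IsLorentzian) (hu : A *ᵥ u = ℓ) :
    (A + vecMulVec ℓ ℓ).PosDef ↔ ℓ ⬝ᵥ u < -1 :=
  ⟨hA.dotProduct_lt_neg_one_of_posDef hu, hA.posDef_add_vecMulVec_of_lt_neg_one hu⟩

theorem smul (hA : A.IsLorentzian) {c : ℝ} (hc : 0 < c) : (c • A).IsLorentzian := by
  have hq : ∀ x : n → ℝ, x ⬝ᵥ (c • A) *ᵥ x = c * (x ⬝ᵥ A *ᵥ x) := fun x => by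
    rw [smul_mulVec, dotProduct_smul, smul_eq_mul]
  obtain ⟨e, he⟩ := hA.exists_neg
  obtain ⟨f, hf⟩ := hA.exists_pos_on_hyperplane
  refine ⟨hA.isHermitian.smul (IsSelfAdjoint.all c), ⟨e, ?_⟩, ⟨f, fun x hx0 hfx => ?_⟩⟩
  · rw [hq]; exact mul_neg_of_pos_of_neg hc he
  · rw [hq]; exact mul_pos hc (hf x hx0 hfx)

theorem fromBlocks_zero_zero {m : Type*} [Fintype m] (hA : A.IsLorentzian) {D : Matrix m m ℝ}
    (hD : D.PosDef) : (fromBlocks A 0 0 D).IsLorentzian := by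
  have hq : ∀ x y, Sum.elim x y ⬝ᵥ fromBlocks A 0 0 D *ᵥ Sum.elim x y =
      x ⬝ᵥ A *ᵥ x + y ⬝ᵥ D *ᵥ y := fun x y => by
    simp [fromBlocks_mulVec, sumElim_dotProduct_sumElim]
  obtain ⟨e, he⟩ := hA.exists_neg
  obtain ⟨f, hf⟩ := hA.exists_pos_on_hyperplane
  refine ⟨hA.isHermitian.fromBlocks (by simp) hD.isHermitian, ⟨Sum.elim e 0, ?_⟩,
    ⟨Sum.elim f 0, fun z hz0 hfz => ?_⟩⟩
  · simpa [hq] using he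
  rw [← Sum.elim_comp_inl_inr z] at hz0 hfz ⊢
  set x := z ∘ Sum.inl
  set y := z ∘ Sum.inr
  rw [sumElim_dotProduct_sumElim, zero_dotProduct, add_zero] at hfz
  rw [hq]
  by_cases hx0 : x = 0
  · have hy0 : y ≠ 0 := by rintro hy0; simp [hx0, hy0] at hz0
    simpa [hx0] using hD.dotProduct_mulVec_pos hy0
  · have hDy : 0 ≤ y ⬝ᵥ D *ᵥ y := by simpa using hD.posSemidef.dotProduct_mulVec_nonneg y
    linarith [hf x hx0 hfz]

end IsLorentzian

theorem IsHermitian.dotProduct_mulVec_self_eq_sum_eigenvalues [DecidableEq n] {A : Matrix n n ℝ}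
    (hA : A.IsHermitian) (x : n → ℝ) :
    x ⬝ᵥ A *ᵥ x = ∑ j, hA.eigenvalues j *
      (star (hA.eigenvectorUnitary : Matrix n n ℝ) *ᵥ x) j ^ 2 := by
  have hstar : star (hA.eigenvectorUnitary : Matrix n n ℝ) =
      (hA.eigenvectorUnitary : Matrix n n ℝ)ᵀ :=
    conjTranspose_eq_transpose_of_trivial _
  conv_lhs => rw [hA.spectral_theorem, Unitary.conjStarAlgAut_apply]
  rw [← mulVec_mulVec, ← mulVec_mulVec, dotProduct_mulVec, ← mulVec_transpose, ← hstar]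
  simp [dotProduct, mulVec_diagonal, sq, mul_left_comm]

theorem IsHermitian.isLorentzian_of_card_neg_eigenvalues_eq_one [DecidableEq n] {A : Matrix n n ℝ}
    (hA : A.IsHermitian) (hdet : IsUnit A.det)
    (hneg : (Finset.univ.filter (fun i => hA.eigenvalues i < 0)).card = 1) :
    A.IsLorentzian := by
  obtain ⟨i₀, hi₀⟩ := Finset.card_eq_one.mp hneg
  have hneg_iff : ∀ i, hA.eigenvalues i < 0 ↔ i = i₀ := fun i => by
    simpa using Finset.ext_iff.mp hi₀ i
  have hpos : ∀ j ≠ i₀, 0 < hA.eigenvalues j := fun j hj => by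
    have hne : hA.eigenvalues j ≠ 0 := fun h0 => hdet.ne_zero <| by
      rw [hA.det_eq_prod_eigenvalues]
      exact Finset.prod_eq_zero (Finset.mem_univ j) (by simp [h0])
    exact lt_of_le_of_ne (not_lt.mp (mt (hneg_iff j).mp hj)) hne.symm
  set U : Matrix n n ℝ := (hA.eigenvectorUnitary : Matrix n n ℝ)
  have hq : ∀ x, x ⬝ᵥ A *ᵥ x = ∑ j, hA.eigenvalues j * (star U *ᵥ x) j ^ 2 :=
    hA.dotProduct_mulVec_self_eq_sum_eigenvalues
  refine ⟨hA, ⟨U *ᵥ Pi.single i₀ 1, ?_⟩, ⟨star U i₀, fun x hx0 hfx => ?_⟩⟩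
  · rw [hq, mulVec_mulVec, Unitary.coe_star_mul_self, one_mulVec]
    simp [Pi.single_apply, (hneg_iff i₀).mpr rfl]
  set c := star U *ᵥ x
  change c i₀ = 0 at hfx
  obtain ⟨j, hj⟩ : ∃ j, c j ≠ 0 := by
    by_contra! hc
    apply hx0
    rw [← one_mulVec x, ← Unitary.coe_mul_star_self hA.eigenvectorUnitary, ← mulVec_mulVec]
    change U *ᵥ c = 0
    rw [show c = 0 from funext hc, mulVec_zero]
  have hji₀ : j ≠ i₀ := by rintro rfl; exact hj hfx
  rw [hq]
  change 0 < ∑ i, hA.eigenvalues i * c i ^ 2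
  refine Finset.sum_pos' (fun i _ => ?_) ⟨j, Finset.mem_univ j, ?_⟩
  · rcases eq_or_ne i i₀ with rfl | hi
    · simp [hfx]
    · exact mul_nonneg (hpos i hi).le (sq_nonneg _)
  · exact mul_pos (hpos j hji₀) (sq_pos_of_ne_zero hj)

end Matrix

theorem stmt8 {d : ℕ} (V : Matrix (Fin d) (Fin d) ℝ) (hV : V.IsHermitian)
    (hdet : IsUnit V.det)
    (hneg : (Finset.univ.filter (fun i => hV.eigenvalues i < 0)).card = 1)
    (Lx Lv : Fin d → ℝ)
    (L : Fin d ⊕ Fin d → ℝ) (hL : L = Sum.elim Lx Lv)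
    (W : Matrix (Fin d ⊕ Fin d) (Fin d ⊕ Fin d) ℝ)
    (hW : W = Matrix.fromBlocks ((2:ℝ)⁻¹ • V) 0 0 ((2:ℝ)⁻¹ • 1)) :
    (W + Matrix.vecMulVec L L).PosDef ↔
      -(dotProduct (V⁻¹.mulVec Lx) Lx) - dotProduct Lv Lv > 1/2 := by
  have hV_lorentzian := hV.isLorentzian_of_card_neg_eigenvalues_eq_one hdet hneg
  have hW_lorentzian : W.IsLorentzian := hW ▸
    (hV_lorentzian.smul (by norm_num)).fromBlocks_zero_zero (Matrix.PosDef.one.smul (by norm_num))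
  have hu : W.mulVec (Sum.elim ((2:ℝ) • V⁻¹.mulVec Lx) ((2:ℝ) • Lv)) = L := by
    simp [hW, hL, Matrix.fromBlocks_mulVec, Matrix.smul_mulVec, Matrix.mulVec_smul, smul_smul,
      Matrix.mulVec_mulVec, Matrix.mul_nonsing_inv V hdet]
  rw [hW_lorentzian.posDef_add_vecMulVec_iff hu, hL, sumElim_dotProduct_sumElim]
  simp only [smul_dotProduct, dotProduct_smul, smul_eq_mul, dotProduct_comm Lx]
  constructor <;> intro h <;> linarith
end

section
/- Let ℓ_x, ℓ_v ∈ ℝ^d, y ∈ (0,1], and M_y = ((y+1)²/(4y))Id + ℓ_vℓ_vᵗ, u_y(x,v) = (ℓ_x·x) ℓ_v + ((y²-1)/(4y)) v. Then for all x, v ∈ ℝ^d: ℓ_xℓ_xᵗ x·x + ((y-1)²/(4y)) v² - M_y⁻¹ u_y(x,v) · u_y(x,v) = ((1+y) ℓ_x·x + (1-y) ℓ_v·v)² / (4y|ℓ_v|² + (y+1)²). -/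
/-!
By the Sherman–Morrison formula, `(α • 1 + ℓ ℓᵀ)⁻¹ u · u = (|u|² - (ℓ · u)² / (α + |ℓ|²)) / α`.
With `α = (y+1)²/(4y)` and `u = u_y(x, v)`, both sides of the identity become rational functions
of the four scalars `ℓ_x · x`, `ℓ_v · v`, `|v|²`, `|ℓ_v|²`, and they agree.
-/

namespace Matrix

variable {K n : Type*} [Field K] [Fintype n] [DecidableEq n]

theorem inv_smul_one_add_vecMulVec {α : K} (a b : n → K) (hα : α ≠ 0)
    (hs : α + b ⬝ᵥ a ≠ 0) :
    (α • 1 + vecMulVec a b)⁻¹ = α⁻¹ • (1 - (α + b ⬝ᵥ a)⁻¹ • vecMulVec a b) := by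
  refine inv_eq_right_inv ?_
  have hsq : vecMulVec a b * vecMulVec a b = (b ⬝ᵥ a) • vecMulVec a b := by
    rw [vecMulVec_mul_vecMulVec, vecMulVec_smul]
  simp only [Matrix.mul_smul, add_mul, mul_sub, Matrix.smul_mul, Matrix.one_mul,
    Matrix.mul_one, hsq]
  match_scalars
  · field_simp
  · field_simp; ring

theorem inv_smul_one_add_vecMulVec_self_mulVec_dotProduct {α : K} (ℓ u : n → K) (hα : α ≠ 0)
    (hs : α + ℓ ⬝ᵥ ℓ ≠ 0) :
    (α • 1 + vecMulVec ℓ ℓ)⁻¹ *ᵥ u ⬝ᵥ u = α⁻¹ * (u ⬝ᵥ u - (ℓ ⬝ᵥ u) ^ 2 / (α + ℓ ⬝ᵥ ℓ)) := by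
  rw [inv_smul_one_add_vecMulVec ℓ ℓ hα hs, smul_mulVec, sub_mulVec, one_mulVec, smul_mulVec,
    vecMulVec_mulVec]
  simp only [smul_dotProduct, sub_dotProduct, op_smul_eq_smul, smul_eq_mul]
  ring

end Matrix

open Matrix

theorem stmt11 {d : ℕ} (ℓx ℓv : Fin d → ℝ) (y : ℝ) (hy : y ∈ Set.Ioc (0:ℝ) 1)
    (M : Matrix (Fin d) (Fin d) ℝ)
    (hM : M = ((y+1)^2/(4*y)) • (1 : Matrix (Fin d) (Fin d) ℝ) + Matrix.vecMulVec ℓv ℓv)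
    (u : (Fin d → ℝ) → (Fin d → ℝ) → Fin d → ℝ)
    (hu : ∀ x v, u x v = (dotProduct ℓx x) • ℓv + ((y^2-1)/(4*y)) • v) :
    ∀ x v : Fin d → ℝ,
      dotProduct ((Matrix.vecMulVec ℓx ℓx).mulVec x) x
        + ((y-1)^2/(4*y)) * dotProduct v v
        - dotProduct (M⁻¹.mulVec (u x v)) (u x v)
      = ((1+y) * dotProduct ℓx x + (1-y) * dotProduct ℓv v)^2
          / (4*y*dotProduct ℓv ℓv + (y+1)^2) := by
  intro x v
  have hy0 : 0 < y := hy.1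
  have hs : 0 ≤ ℓv ⬝ᵥ ℓv := dotProduct_self_star_nonneg ℓv
  rw [hM, inv_smul_one_add_vecMulVec_self_mulVec_dotProduct ℓv _ (by positivity) (by positivity),
    vecMulVec_mulVec, hu]
  simp only [op_smul_eq_smul, smul_dotProduct, dotProduct_add, add_dotProduct, dotProduct_smul,
    smul_eq_mul, dotProduct_comm v ℓv]
  field_simp
  ring
end

section
/- Let m̌(μ) = 2∫₀¹ (y+1)^{d-2} e^{-yμ} dy for μ ≥ 0 and d ≥ 1. Then for every k ∈ ℕ there exists C_k > 0 such that |m̌^{(k)}(μ)| ≤ C_k (1+μ)^{-(k+1)} for all μ ≥ 0. -/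
/-!
Differentiating under the integral sign, the `k`-th derivative of `μ ↦ ∫₀¹ g(y) e^{-yμ} dy` is
`∫₀¹ (-y)^k g(y) e^{-yμ} dy`. For `μ ≥ 0` and `0 ≤ y ≤ 1` we have `e^{-yμ} ≤ e · e^{-y(1+μ)}`, so for
bounded `g` this is at most `‖g‖_∞ · e · ∫₀^∞ y^k e^{-y(1+μ)} dy = ‖g‖_∞ · e · k! / (1+μ)^{k+1}`.
-/

open Real Set MeasureTheory intervalIntegral
open scoped Nat Interval

/-- The Laplace transform of `g · 1_{[0,1]}`; the paper's `m̌` is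
`unitLaplace fun y => 2 * (y + 1) ^ (d - 2)`. -/
noncomputable def unitLaplace (g : ℝ → ℝ) (μ : ℝ) : ℝ :=
  ∫ y in (0:ℝ)..1, g y * exp (-y * μ)

lemma integral_pow_mul_exp_neg_mul_le (k : ℕ) {μ : ℝ} (hμ : 0 ≤ μ) :
    ∫ y in (0:ℝ)..1, y ^ k * exp (-y * μ) ≤ exp 1 * k ! / (1 + μ) ^ (k + 1) := by
  calc ∫ y in (0:ℝ)..1, y ^ k * exp (-y * μ)
      ≤ ∫ y in (0:ℝ)..1, exp 1 * (y ^ k * exp (-((1 + μ) * y))) := by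
        refine integral_mono_on zero_le_one (Continuous.intervalIntegrable (by fun_prop) _ _)
          (Continuous.intervalIntegrable (by fun_prop) _ _) fun y hy => ?_
        have hsplit : exp (-y * μ) = exp y * exp (-((1 + μ) * y)) := by rw [← exp_add]; ring_nf
        rw [hsplit, mul_left_comm]
        exact mul_le_mul_of_nonneg_right (exp_le_exp.mpr hy.2)
          (mul_nonneg (pow_nonneg hy.1 k) (exp_nonneg _))
    _ ≤ exp 1 * (k ! / (1 + μ) ^ (k + 1)) := by
        rw [intervalIntegral.integral_const_mul]
        gcongr
        exact intervalIntegral_pow_mul_exp_neg_le zero_le_one (by linarith)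
    _ = exp 1 * k ! / (1 + μ) ^ (k + 1) := by ring

section

variable {g : ℝ → ℝ}

lemma hasDerivAt_unitLaplace (hg : ContinuousOn g (Icc 0 1)) (μ₀ : ℝ) :
    HasDerivAt (unitLaplace g) (unitLaplace (fun y => -y * g y) μ₀) μ₀ := by
  obtain ⟨M, hM⟩ := isCompact_Icc.exists_bound_of_continuousOn hg
  have hIoc : Ι (0:ℝ) 1 ⊆ Icc 0 1 := by
    rw [uIoc_of_le zero_le_one]; exact Ioc_subset_Icc_self
  have hmeas : ∀ (h : ℝ → ℝ) (x : ℝ), ContinuousOn h (Icc 0 1) →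
      AEStronglyMeasurable (fun y => h y * exp (-y * x)) (volume.restrict (Ι 0 1)) :=
    fun h x hh => ((hh.mul (by fun_prop)).mono hIoc).aestronglyMeasurable measurableSet_uIoc
  refine (hasDerivAt_integral_of_dominated_loc_of_deriv_le
    (F := fun x y => g y * exp (-y * x)) (F' := fun x y => -y * g y * exp (-y * x))
    (bound := fun _ => M * exp (|μ₀| + 1)) (Metric.ball_mem_nhds μ₀ one_pos)
    (.of_forall fun x => hmeas g x hg) ?_ (hmeas _ μ₀ (continuousOn_neg.mul hg))
    ?_ intervalIntegrable_const ?_).2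
  · exact ((hg.mul (by fun_prop)).mono (uIcc_of_le zero_le_one).subset).intervalIntegrable
  · refine .of_forall fun y hy x hx => ?_
    rw [uIoc_of_le zero_le_one] at hy
    have hx' : |x| ≤ |μ₀| + 1 := by
      have := abs_sub_abs_le_abs_sub x μ₀
      rw [← Real.dist_eq] at this
      linarith [Metric.mem_ball.mp hx]
    have hexp : exp (-y * x) ≤ exp (|μ₀| + 1) :=
      exp_le_exp.mpr (by nlinarith [neg_abs_le x, abs_nonneg x, hy.1, hy.2])
    rw [norm_mul, norm_mul, norm_neg, Real.norm_of_nonneg hy.1.le,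
      Real.norm_of_nonneg (exp_nonneg _)]
    have hgy : y * ‖g y‖ ≤ M := by
      nlinarith [norm_nonneg (g y), hM y (Ioc_subset_Icc_self hy), hy.1, hy.2]
    exact mul_le_mul hgy hexp (exp_nonneg _) ((mul_nonneg hy.1.le (norm_nonneg _)).trans hgy)
  · refine .of_forall fun y _ x _ => ?_
    exact ((((hasDerivAt_id' x).const_mul (-y)).exp).const_mul (g y)).congr_deriv (by ring)

lemma iteratedDeriv_unitLaplace (hg : ContinuousOn g (Icc 0 1)) (k : ℕ) :
    iteratedDeriv k (unitLaplace g) = unitLaplace (fun y => (-y) ^ k * g y) := by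
  induction k generalizing g with
  | zero => simp
  | succ k ih =>
    have hg' : ContinuousOn (fun y => -y * g y) (Icc 0 1) := continuousOn_neg.mul hg
    rw [iteratedDeriv_succ', funext fun μ => (hasDerivAt_unitLaplace hg μ).deriv, ih hg']
    simp only [pow_succ, mul_assoc]

theorem abs_iteratedDeriv_unitLaplace_le (hg : ContinuousOn g (Icc 0 1)) (k : ℕ) :
    ∃ C > 0, ∀ μ ≥ (0:ℝ),
      |iteratedDeriv k (unitLaplace g) μ| ≤ C * (1 + μ) ^ (-((k:ℤ) + 1)) := by
  obtain ⟨M, hM⟩ := isCompact_Icc.exists_bound_of_continuousOn hg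
  refine ⟨max M 1 * exp 1 * k !, by positivity, fun μ hμ => ?_⟩
  have hpow : (1 + μ) ^ (-((k:ℤ) + 1)) = ((1 + μ) ^ (k + 1))⁻¹ := by
    rw [← zpow_natCast, ← zpow_neg]; push_cast; rfl
  rw [iteratedDeriv_unitLaplace hg, hpow, ← Real.norm_eq_abs]
  calc ‖unitLaplace (fun y => (-y) ^ k * g y) μ‖
      ≤ ∫ y in (0:ℝ)..1, max M 1 * (y ^ k * exp (-y * μ)) := by
        refine norm_integral_le_of_norm_le zero_le_one (.of_forall fun y hy => ?_)
          (Continuous.intervalIntegrable (by fun_prop) _ _)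
        rw [norm_mul, norm_mul, norm_pow, norm_neg, Real.norm_of_nonneg hy.1.le,
          Real.norm_of_nonneg (exp_nonneg _), mul_right_comm, mul_comm (max M 1)]
        gcongr
        · exact mul_nonneg (pow_nonneg hy.1.le k) (exp_nonneg _)
        · exact (hM y (Ioc_subset_Icc_self hy)).trans (le_max_left _ _)
    _ ≤ max M 1 * (exp 1 * k ! / (1 + μ) ^ (k + 1)) := by
        rw [intervalIntegral.integral_const_mul]
        gcongr
        exact integral_pow_mul_exp_neg_mul_le k hμ
    _ = max M 1 * exp 1 * k ! * ((1 + μ) ^ (k + 1))⁻¹ := by ring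

end

theorem stmt19_general {d : ℕ}
    (m : ℝ → ℝ)
    (hm : ∀ μ : ℝ, m μ = 2 * ∫ y in (0:ℝ)..1, (y+1)^((d:ℤ)-2) * Real.exp (-y*μ)) :
    ∀ k : ℕ, ∃ C > 0, ∀ μ ≥ (0:ℝ), |iteratedDeriv k m μ| ≤ C * (1+μ)^(-((k:ℤ)+1)) := by
  have hm' : m = unitLaplace fun y => 2 * (y + 1) ^ ((d:ℤ) - 2) := by
    funext μ
    simp only [hm, unitLaplace, mul_assoc, intervalIntegral.integral_const_mul]
  have hg : ContinuousOn (fun y : ℝ => 2 * (y + 1) ^ ((d:ℤ) - 2)) (Icc 0 1) :=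
    continuousOn_const.mul <| ContinuousOn.zpow₀ (by fun_prop) _
      fun y hy => Or.inl (by linarith [hy.1])
  exact hm' ▸ abs_iteratedDeriv_unitLaplace_le hg

theorem stmt19 {d : ℕ} (hd : 1 ≤ d)
    (m : ℝ → ℝ)
    (hm : ∀ μ : ℝ, m μ = 2 * ∫ y in (0:ℝ)..1, (y+1)^((d:ℤ)-2) * Real.exp (-y*μ)) :
    ∀ k : ℕ, ∃ C > 0, ∀ μ ≥ (0:ℝ), |iteratedDeriv k m μ| ≤ C * (1+μ)^(-((k:ℤ)+1)) :=
  stmt19_general m hm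
end
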